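/- Let n ≥ 1 and let G₀ = G_{0ⁿ} be the set associated with the word consisting of n zeros. Then G₀ is a connected subset of ℝ² if and only if |ε| ≤ p^{n+1}. -/

import Mathlib

noncomputable section

/-- `b_j = ε` if `j` is odd and `b_j = 0` if `j` is even. -/
def bshift (ε : ℝ) (j : ℤ) : ℝ := if Odd j then ε else 0

/-- The self-similar set `T_ε` associated with `p = 2m+1` and the shift `ε`. -/
def Tset (p : ℤ) (m : ℕ) (ε : ℝ) : Set (ℝ × ℝ) :=
  { z | ∃ i j : ℕ → ℤ, (∀ k, |i k| ≤ (m : ℤ)) ∧ (∀ k, |j k| ≤ (m : ℤ)) ∧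
      z.1 = ∑' k : ℕ, ((p : ℝ) ^ (k + 1))⁻¹ * ((i k : ℝ) + bshift ε (j k)) ∧
      z.2 = ∑' k : ℕ, ((p : ℝ) ^ (k + 1))⁻¹ * (j k : ℝ) }

/-- The map `f_{i,j}(x, y) = ((x + i + b_j)/p, (y + j)/p)`. -/
def fmap (p : ℤ) (ε : ℝ) (i j : ℤ) (z : ℝ × ℝ) : ℝ × ℝ :=
  ((z.1 + (i : ℝ) + bshift ε j) / (p : ℝ), (z.2 + (j : ℝ)) / (p : ℝ))

/-- For a word `j₁ ⋯ j_n` (a list of integers in `{-m, …, m}`),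
`G_{j₁⋯j_n} = ⋃_{i₁,…,i_n ∈ {-m,…,m}} f_{i₁,j₁} ∘ ⋯ ∘ f_{i_n,j_n}(T_ε)`. -/
def Gset (p : ℤ) (m : ℕ) (ε : ℝ) : List ℤ → Set (ℝ × ℝ)
  | [] => Tset p m ε
  | j :: w => ⋃ i ∈ Finset.Icc (-(m : ℤ)) (m : ℤ), fmap p ε i j '' Gset p m ε w

open Set Filter Topology

/-!
For a balanced digit sequence `j` put `digitValue p j = ∑ jₖ p^{-(k+1)}` and
`oddWeight p j = ∑_{jₖ odd} p^{-(k+1)}`. Rounding the first coordinate one digit at a time shows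
that, once the second coordinate is stretched by `pⁿ`, `G_{0ⁿ}` is the union over all `j` of the
horizontal unit segments centred at `(β · oddWeight p j, digitValue p j)`, where `β = ε / pⁿ`.

The two expansions `…d m m m…` and `…(d+1) (-m) (-m) (-m)…`, first differing at position `t`,
have the same height and centres exactly `|β| p^{-(t+1)}` apart. If `|β| ≤ p`, their segments
overlap, so a locally constant function on the union is constant along these links; as it
depends on only finitely many digits (compactness), a descending induction on their number makes
it constant. If `|β| > p`, the sequences with first digit `≤ 0` and `≥ 1` give two compact pieces
lying below and above the height `1/(2p)`; at that height the only sequences are `0.0mmm…` and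
`0.1(-m)(-m)…`, whose segments are `|β|/p > 1` apart.
-/

section Radix

variable {P : ℝ} {c d : ℕ → ℝ} {C : ℝ}

def radixSum (P : ℝ) (c : ℕ → ℝ) : ℝ := ∑' k, (P ^ (k + 1))⁻¹ * c k

lemma hasSum_inv_pow_succ (hP : 1 < P) : HasSum (fun k : ℕ => (P ^ (k + 1))⁻¹) (P - 1)⁻¹ := by
  have h := (hasSum_geometric_of_lt_one (inv_nonneg.2 (by positivity))
    (inv_lt_one_of_one_lt₀ hP)).mul_left P⁻¹
  have e : (fun k : ℕ => (P ^ (k + 1))⁻¹) = fun k => P⁻¹ * P⁻¹ ^ k := by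
    ext k; rw [pow_succ', mul_inv, ← inv_pow]
  rwa [e, (by field_simp : (P - 1)⁻¹ = P⁻¹ * (1 - P⁻¹)⁻¹)]

lemma abs_inv_pow_mul_le (hP : 1 < P) (hc : ∀ k, |c k| ≤ C) (k : ℕ) :
    |(P ^ (k + 1))⁻¹ * c k| ≤ (P ^ (k + 1))⁻¹ * C := by
  rw [abs_mul, abs_of_pos (by positivity)]
  exact mul_le_mul_of_nonneg_left (hc k) (by positivity)

lemma summable_radix (hP : 1 < P) (hc : ∀ k, |c k| ≤ C) :
    Summable fun k => (P ^ (k + 1))⁻¹ * c k :=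
  ((hasSum_inv_pow_succ hP).summable.mul_right C).of_norm_bounded
    (abs_inv_pow_mul_le hP hc)

lemma abs_radixSum_le (hP : 1 < P) (hc : ∀ k, |c k| ≤ C) : |radixSum P c| ≤ C / (P - 1) := by
  have hC := (hasSum_inv_pow_succ hP).mul_right C
  rw [← div_eq_inv_mul] at hC
  have hb k := abs_le.1 (abs_inv_pow_mul_le hP hc k)
  refine abs_le.2 ⟨?_, ?_⟩
  · rw [← neg_div]
    exact hasSum_le (fun k => (hb k).1) (by simpa [neg_div] using hC.neg)
      (summable_radix hP hc).hasSum
  · exact hasSum_le (fun k => (hb k).2) (summable_radix hP hc).hasSum hC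

lemma radixSum_add (hP : 1 < P) {D : ℝ} (hc : ∀ k, |c k| ≤ C) (hd : ∀ k, |d k| ≤ D) :
    radixSum P (fun k => c k + d k) = radixSum P c + radixSum P d := by
  simp only [radixSum, mul_add]
  exact (summable_radix hP hc).tsum_add (summable_radix hP hd)

lemma radixSum_const_mul (a : ℝ) (c : ℕ → ℝ) :
    radixSum P (fun k => a * c k) = a * radixSum P c := by
  simp only [radixSum, mul_left_comm _ a, tsum_mul_left]

lemma radixSum_neg (c : ℕ → ℝ) : radixSum P (fun k => -c k) = -radixSum P c := by
  simpa using radixSum_const_mul (P := P) (-1) c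

lemma radixSum_eq_div (hP : 1 < P) (hc : ∀ k, |c k| ≤ C) :
    radixSum P c = (c 0 + radixSum P fun k => c (k + 1)) / P := by
  rw [radixSum, ← (summable_radix hP hc).sum_add_tsum_nat_add 1, radixSum]
  simp only [Finset.range_one, Finset.sum_singleton, pow_succ]
  rw [add_div, ← tsum_div_const]
  congr 1
  · field_simp
  · congr 1; ext k; field_simp

lemma eq_of_radixSum_eq (hP : 1 < P) (hc : ∀ k, |c k| ≤ C) (h : radixSum P c = C / (P - 1)) :
    c = fun _ => C := by
  have hsum : HasSum (fun k => (P ^ (k + 1))⁻¹ * (C - c k)) 0 := by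
    have := ((hasSum_inv_pow_succ hP).mul_right C).sub (summable_radix hP hc).hasSum
    simp only [mul_sub]
    rwa [← div_eq_inv_mul, ← radixSum, h, sub_self] at this
  have hzero := (hasSum_zero_iff_of_nonneg fun k =>
    mul_nonneg (by positivity) (sub_nonneg.2 (le_of_abs_le (hc k)))).1 hsum
  ext k
  have := congrFun hzero k
  simp only [Pi.zero_apply, mul_eq_zero, inv_eq_zero, pow_eq_zero_iff', sub_eq_zero] at this
  exact (this.resolve_left (by rintro ⟨h0, -⟩; linarith)).symm

end Radix

section Splice

variable {α β : Type*}

def splice (w : ℕ → α) (t : ℕ) (d e : α) : ℕ → α :=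
  fun k => if k < t then w k else if k = t then d else e

variable {w w' : ℕ → α} {t : ℕ} {d e e' : α}

lemma comp_splice (f : α → β) : f ∘ splice w t d e = splice (f ∘ w) t (f d) (f e) := by
  ext k; simp only [splice, Function.comp_apply]; split_ifs <;> rfl

lemma splice_mem_cylinder_splice : splice w t d e ∈ PiNat.cylinder (splice w t d e') (t + 1) :=
  PiNat.mem_cylinder_iff.2 fun k hk => by
    simp only [splice]; split_ifs with h₁ h₂ <;> first | rfl | omega

lemma mem_cylinder_splice_self : w ∈ PiNat.cylinder (splice w t (w t) e) (t + 1) :=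
  PiNat.mem_cylinder_iff.2 fun k hk => by
    simp only [splice]; split_ifs with h₁ h₂ <;> first | rfl | (subst h₂; rfl) | omega

lemma splice_congr (h : w' ∈ PiNat.cylinder w t) : splice w' t d e = splice w t d e := by
  ext k; simp only [splice]; split_ifs with hk
  · exact PiNat.mem_cylinder_iff.1 h k hk
  all_goals rfl

lemma eq_splice_zero_of_forall {j : ℕ → α} (h0 : j 0 = d) (h : ∀ k, j (k + 1) = e) :
    j = splice w 0 d e := by
  ext k
  rcases k with _ | k
  · simp [splice, h0]
  · simp [splice, h]

end Splice

lemma radixSum_splice {P : ℝ} (hP : 1 < P) (c : ℕ → ℝ) (t : ℕ) (a b : ℝ) :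
    radixSum P (splice c t a b) =
      ∑ k ∈ Finset.range t, (P ^ (k + 1))⁻¹ * c k + (P ^ (t + 1))⁻¹ * (a + b / (P - 1)) := by
  have htail : (fun k => (P ^ (k + (t + 1) + 1))⁻¹ * splice c t a b (k + (t + 1))) =
      fun k => (P ^ (t + 1))⁻¹ * ((P ^ (k + 1))⁻¹ * b) := by
    ext k
    simp only [splice, if_neg (by omega : ¬ k + (t + 1) < t), if_neg (by omega : k + (t + 1) ≠ t)]
    rw [← mul_assoc, ← mul_inv, ← pow_add]
    ring_nf
  have hsum : Summable fun k => (P ^ (k + 1))⁻¹ * splice c t a b k :=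
    (summable_nat_add_iff (t + 1)).1
      (htail ▸ ((hasSum_inv_pow_succ hP).summable.mul_right b).mul_left _)
  rw [radixSum, ← hsum.sum_add_tsum_nat_add (t + 1), htail, tsum_mul_left,
    Finset.sum_range_succ, tsum_mul_right, (hasSum_inv_pow_succ hP).tsum_eq, add_assoc, mul_add]
  congr 1
  · refine Finset.sum_congr rfl fun k hk => ?_
    rw [splice, if_pos (Finset.mem_range.1 hk)]
  · simp only [splice, lt_irrefl, if_false, if_true, div_eq_inv_mul]

def balancedSeqs (m : ℕ) : Set (ℕ → ℤ) := {j | ∀ k, |j k| ≤ m}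

def oddIndicator (d : ℤ) : ℝ := if Odd d then 1 else 0

def digitValue (P : ℝ) (j : ℕ → ℤ) : ℝ := radixSum P ((↑) ∘ j)

def oddWeight (P : ℝ) (j : ℕ → ℤ) : ℝ := radixSum P (oddIndicator ∘ j)

section Digits

variable {m : ℕ} {P : ℝ} {j : ℕ → ℤ}

lemma one_lt_of_eq_two_mul_add_one (hm : 1 ≤ m) (hP : P = 2 * m + 1) : 1 < P := by
  have : (1 : ℝ) ≤ m := by exact_mod_cast hm
  linarith

lemma isCompact_balancedSeqs (m : ℕ) : IsCompact (balancedSeqs m) := by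
  have : balancedSeqs m = univ.pi fun _ => Icc (-(m : ℤ)) m := by
    ext j; simp only [balancedSeqs, mem_univ_pi, mem_Icc, abs_le]; rfl
  rw [this]
  exact isCompact_univ_pi fun _ => (finite_Icc _ _).isCompact

lemma splice_mem_balancedSeqs {w : ℕ → ℤ} (hw : w ∈ balancedSeqs m) (t : ℕ) {d e : ℤ}
    (hd : |d| ≤ m) (he : |e| ≤ m) : splice w t d e ∈ balancedSeqs m := fun k => by
  simp only [splice]; split_ifs
  exacts [hw k, hd, he]

lemma abs_cast_le_of_mem_balancedSeqs (hj : j ∈ balancedSeqs m) (k : ℕ) :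
    |(((↑) ∘ j) k : ℝ)| ≤ m := by
  simpa [← Int.cast_abs] using (Int.cast_le (R := ℝ)).2 (hj k)

lemma abs_oddIndicator_le (d : ℤ) : |oddIndicator d| ≤ 1 := by
  unfold oddIndicator; split_ifs <;> simp

lemma oddIndicator_neg (d : ℤ) : oddIndicator (-d) = oddIndicator d := by
  simp [oddIndicator, odd_neg]

lemma abs_oddIndicator_sub_add_one (d : ℤ) : |oddIndicator d - oddIndicator (d + 1)| = 1 := by
  rcases Int.even_or_odd d with h | h
  · simp [oddIndicator, h, Int.not_odd_iff_even.2 h]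
  · simp [oddIndicator, h, Int.not_even_iff_odd.2 h]

lemma abs_digitValue_le (hm : 1 ≤ m) (hP : P = 2 * m + 1) (hj : j ∈ balancedSeqs m) :
    |digitValue P j| ≤ 1 / 2 := by
  calc |digitValue P j| ≤ m / (P - 1) :=
        abs_radixSum_le (one_lt_of_eq_two_mul_add_one hm hP) (abs_cast_le_of_mem_balancedSeqs hj)
    _ = 1 / 2 := by rw [hP]; field_simp; ring

lemma continuousOn_digitValue (hP : 1 < P) : ContinuousOn (digitValue P) (balancedSeqs m) :=
  continuousOn_tsum (fun k => (continuous_const.mul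
      (continuous_of_discreteTopology.comp (continuous_apply k))).continuousOn)
    ((hasSum_inv_pow_succ hP).summable.mul_right (m : ℝ))
    fun k _ hj => abs_inv_pow_mul_le hP (abs_cast_le_of_mem_balancedSeqs hj) k

lemma continuous_oddWeight (hP : 1 < P) : Continuous (oddWeight P) :=
  continuous_tsum (fun k => continuous_const.mul
      (continuous_of_discreteTopology.comp (continuous_apply k)))
    ((hasSum_inv_pow_succ hP).summable.mul_right 1)
    fun k j => abs_inv_pow_mul_le hP (fun k => abs_oddIndicator_le (j k)) k

end Digits

section Expansions

variable {m : ℕ} {P : ℝ} {j : ℕ → ℤ}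

lemma exists_int_abs_sub_le_half_iff {s : ℝ} :
    (∃ i : ℤ, |i| ≤ m ∧ |s - i| ≤ 1 / 2) ↔ |s| ≤ m + 1 / 2 := by
  constructor
  · rintro ⟨i, hi, hsi⟩
    have hi' : |(i : ℝ)| ≤ m := by exact_mod_cast hi
    calc |s| = |(s - i) + i| := by rw [sub_add_cancel]
      _ ≤ |s - i| + |(i : ℝ)| := abs_add_le _ _
      _ ≤ m + 1 / 2 := by linarith
  · intro hs
    obtain ⟨hs₁, hs₂⟩ := abs_le.1 hs
    have hc₁ := Int.le_ceil (s - 1 / 2)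
    have hc₂ := Int.ceil_lt_add_one (s - 1 / 2)
    have hcm : ⌈s - 1 / 2⌉ ≤ m := Int.ceil_le.2 (by push_cast; linarith)
    rcases le_or_gt (-(m : ℤ)) ⌈s - 1 / 2⌉ with h | h
    · exact ⟨⌈s - 1 / 2⌉, abs_le.2 ⟨h, hcm⟩, abs_le.2 ⟨by linarith, by linarith⟩⟩
    · have h' : (⌈s - 1 / 2⌉ : ℝ) < -m := by exact_mod_cast h
      refine ⟨-m, by simp, abs_le.2 ⟨?_, ?_⟩⟩ <;> push_cast <;> linarith

lemma exists_digitValue_eq (hm : 1 ≤ m) (hP : P = 2 * m + 1) {t : ℝ} (ht : |t| ≤ 1 / 2) :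
    ∃ j ∈ balancedSeqs m, digitValue P j = t := by
  have hP1 := one_lt_of_eq_two_mul_add_one hm hP
  have step (s : {s : ℝ // |s| ≤ 1 / 2}) : ∃ i : ℤ, |i| ≤ m ∧ |P * s - i| ≤ 1 / 2 :=
    exists_int_abs_sub_le_half_iff.2 <| by
      rw [abs_mul, abs_of_pos (by linarith), hP]; nlinarith [s.2, abs_nonneg (s : ℝ)]
  choose digit hdigit_le hdigit using step
  -- the greedy remainders `rₖ₊₁ = P rₖ - dₖ`
  let r : ℕ → {s : ℝ // |s| ≤ 1 / 2} := fun k => Nat.rec ⟨t, ht⟩ (fun _ s => ⟨_, hdigit s⟩) k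
  refine ⟨fun k => digit (r k), fun k => hdigit_le _, ?_⟩
  have hterm (k : ℕ) : (P ^ (k + 1))⁻¹ * (digit (r k) : ℝ) =
      (P ^ k)⁻¹ * (r k).1 - (P ^ (k + 1))⁻¹ * (r (k + 1)).1 := by
    change _ = _ - _ * (P * (r k).1 - digit (r k))
    field_simp
    ring
  have hsum := summable_radix hP1 (C := m) fun k => abs_cast_le_of_mem_balancedSeqs
    (j := fun k => digit (r k)) (fun k => hdigit_le _) k
  refine (hsum.hasSum_iff_tendsto_nat.2 ?_).tsum_eq
  have hr0 : (r 0).1 = t := rfl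
  simp only [Function.comp_apply, hterm, Finset.sum_range_sub', pow_zero, inv_one, one_mul, hr0]
  have hlim : Tendsto (fun K => (P ^ K)⁻¹ * (r K).1) atTop (𝓝 0) := by
    refine squeeze_zero_norm (a := fun K => (P⁻¹) ^ K * (1 / 2)) (fun K => ?_) ?_
    · rw [norm_mul, norm_inv, norm_pow, Real.norm_of_nonneg (by linarith), inv_pow]
      exact mul_le_mul_of_nonneg_left (r K).2 (by positivity)
    · simpa using (tendsto_pow_atTop_nhds_zero_of_lt_one (by positivity)
        (inv_lt_one_of_one_lt₀ hP1)).mul_const (1 / 2 : ℝ)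
  simpa using hlim.const_sub t

lemma digitValue_eq_div (hP : 1 < P) (hj : j ∈ balancedSeqs m) :
    digitValue P j = (j 0 + digitValue P fun k => j (k + 1)) / P :=
  radixSum_eq_div hP (abs_cast_le_of_mem_balancedSeqs hj)

/-- The only balanced expansions of `1 / (2P)` are `0.0mmm…` and `0.1(-m)(-m)(-m)…`. -/
lemma eq_splice_of_digitValue_eq (hm : 1 ≤ m) (hP : P = 2 * m + 1) (hj : j ∈ balancedSeqs m)
    (h : digitValue P j = (2 * P)⁻¹) :
    j = splice (fun _ => 0) 0 0 (m : ℤ) ∨ j = splice (fun _ => 0) 0 1 (-m : ℤ) := by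
  have hP1 := one_lt_of_eq_two_mul_add_one hm hP
  have htail : (fun k => j (k + 1)) ∈ balancedSeqs m := fun k => hj (k + 1)
  set T := digitValue P fun k => j (k + 1) with hT
  have hT' : |T| ≤ 1 / 2 := abs_digitValue_le hm hP htail
  rw [digitValue_eq_div hP1 hj, ← hT] at h
  have hsum : (j 0 : ℝ) + T = 1 / 2 := by field_simp at h; linarith
  have hhalf : (1 : ℝ) / 2 = m / (P - 1) := by rw [hP]; field_simp; ring
  obtain ⟨hT₁, hT₂⟩ := abs_le.1 hT'
  have h0 : -1 < j 0 := by exact_mod_cast (by linarith : (-1 : ℝ) < j 0)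
  have h1 : j 0 < 2 := by exact_mod_cast (by linarith : (j 0 : ℝ) < 2)
  have hj0 : j 0 = 0 ∨ j 0 = 1 := by omega
  rcases hj0 with hj0 | hj0 <;> rw [hj0] at hsum <;> push_cast at hsum
  · refine .inl (eq_splice_zero_of_forall hj0 fun k => ?_)
    have hmax := eq_of_radixSum_eq hP1 (abs_cast_le_of_mem_balancedSeqs htail)
      (by change T = _; linarith)
    have hk : ((j (k + 1) : ℤ) : ℝ) = m := congrFun hmax k
    exact_mod_cast hk
  · refine .inr (eq_splice_zero_of_forall hj0 fun k => ?_)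
    have hmax := eq_of_radixSum_eq hP1 (c := fun k => -((↑) ∘ fun k => j (k + 1)) k)
      (fun k => by rw [abs_neg]; exact abs_cast_le_of_mem_balancedSeqs htail k)
      (by rw [radixSum_neg]; change -T = _; linarith)
    have hk : ((j (k + 1) : ℤ) : ℝ) = -m := by
      simpa [neg_eq_iff_eq_neg] using congrFun hmax k
    exact_mod_cast hk

end Expansions

section Junction

variable {m : ℕ} {P : ℝ}

lemma digitValue_splice_eq (hm : 1 ≤ m) (hP : P = 2 * m + 1) (w : ℕ → ℤ) (t : ℕ) (d : ℤ) :
    digitValue P (splice w t d m) = digitValue P (splice w t (d + 1) (-m)) := by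
  simp only [digitValue, comp_splice, radixSum_splice (one_lt_of_eq_two_mul_add_one hm hP)]
  congr 2
  rw [hP]; push_cast; field_simp; ring

lemma abs_oddWeight_splice_sub (hP : 1 < P) (w : ℕ → ℤ) (t : ℕ) (d e : ℤ) :
    |oddWeight P (splice w t d e) - oddWeight P (splice w t (d + 1) (-e))| = (P ^ (t + 1))⁻¹ := by
  simp only [oddWeight, comp_splice, radixSum_splice hP, Function.comp_apply, oddIndicator_neg]
  rw [add_sub_add_left_eq_sub, ← mul_sub, add_sub_add_right_eq_sub, abs_mul,
    abs_oddIndicator_sub_add_one, mul_one, abs_of_pos (by positivity)]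

end Junction

section Segments

variable {m : ℕ} {P β : ℝ} {j a b : ℕ → ℤ} {S : Set (ℕ → ℤ)}

def seg (P β : ℝ) (j : ℕ → ℤ) : Set (ℝ × ℝ) :=
  Metric.closedBall (β * oddWeight P j) (1 / 2) ×ˢ {digitValue P j}

def segUnion (P β : ℝ) (S : Set (ℕ → ℤ)) : Set (ℝ × ℝ) := ⋃ j ∈ S, seg P β j

lemma mem_seg {z : ℝ × ℝ} :
    z ∈ seg P β j ↔ |z.1 - β * oddWeight P j| ≤ 1 / 2 ∧ z.2 = digitValue P j := by
  simp [seg, Real.dist_eq]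

lemma mem_segUnion {z : ℝ × ℝ} : z ∈ segUnion P β S ↔ ∃ j ∈ S, z ∈ seg P β j := by
  simp [segUnion]

lemma center_mem_seg : (β * oddWeight P j, digitValue P j) ∈ seg P β j := by
  simp [mem_seg]

lemma isPreconnected_seg : IsPreconnected (seg P β j) :=
  (convex_closedBall _ _).isPreconnected.prod isPreconnected_singleton

lemma seg_inter_nonempty_iff :
    (seg P β a ∩ seg P β b).Nonempty ↔
      digitValue P a = digitValue P b ∧ |β * oddWeight P a - β * oddWeight P b| ≤ 1 := by
  constructor
  · rintro ⟨z, hza, hzb⟩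
    obtain ⟨hxa, hya⟩ := mem_seg.1 hza
    obtain ⟨hxb, hyb⟩ := mem_seg.1 hzb
    refine ⟨hya.symm.trans hyb, ?_⟩
    calc |β * oddWeight P a - β * oddWeight P b|
        = |(z.1 - β * oddWeight P b) - (z.1 - β * oddWeight P a)| := by ring_nf
      _ ≤ |z.1 - β * oddWeight P b| + |z.1 - β * oddWeight P a| := abs_sub _ _
      _ ≤ 1 := by linarith
  · rintro ⟨hy, hx⟩
    refine ⟨((β * oddWeight P a + β * oddWeight P b) / 2, digitValue P a), mem_seg.2 ⟨?_, rfl⟩,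
      mem_seg.2 ⟨?_, hy⟩⟩
    · rw [show (β * oddWeight P a + β * oddWeight P b) / 2 - β * oddWeight P a =
        -((β * oddWeight P a - β * oddWeight P b) / 2) by ring, abs_neg, abs_div]
      norm_num; linarith
    · rw [show (β * oddWeight P a + β * oddWeight P b) / 2 - β * oddWeight P b =
        (β * oddWeight P a - β * oddWeight P b) / 2 by ring, abs_div]
      norm_num; linarith

lemma seg_splice_inter_nonempty (hm : 1 ≤ m) (hP : P = 2 * m + 1) (hβ : |β| ≤ P)
    (w : ℕ → ℤ) (t : ℕ) (d : ℤ) :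
    (seg P β (splice w t d m) ∩ seg P β (splice w t (d + 1) (-m))).Nonempty := by
  have hP1 := one_lt_of_eq_two_mul_add_one hm hP
  refine seg_inter_nonempty_iff.2 ⟨digitValue_splice_eq hm hP w t d, ?_⟩
  rw [← mul_sub, abs_mul, abs_oddWeight_splice_sub hP1]
  calc |β| * (P ^ (t + 1))⁻¹ ≤ P * (P ^ (t + 1))⁻¹ :=
        mul_le_mul_of_nonneg_right hβ (by positivity)
    _ = (P ^ t)⁻¹ := by rw [pow_succ]; field_simp
    _ ≤ 1 := inv_le_one_of_one_le₀ (one_le_pow₀ hP1.le)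

lemma isCompact_segUnion (hP : 1 < P) (hS : IsCompact S) (hSm : S ⊆ balancedSeqs m) :
    IsCompact (segUnion P β S) := by
  have himage : segUnion P β S = (fun q : (ℕ → ℤ) × ℝ => (β * oddWeight P q.1 + q.2,
      digitValue P q.1)) '' (S ×ˢ Metric.closedBall 0 (1 / 2)) := by
    ext z
    simp only [mem_segUnion, mem_seg, mem_image, mem_prod, Metric.mem_closedBall, Real.dist_eq,
      sub_zero, Prod.exists]
    constructor
    · rintro ⟨j, hj, hx, hy⟩
      exact ⟨j, _, ⟨hj, hx⟩, by rw [add_sub_cancel, ← hy]⟩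
    · rintro ⟨j, t, ⟨hj, ht⟩, rfl⟩
      exact ⟨j, hj, by simpa using ht, rfl⟩
  rw [himage]
  refine (hS.prod (isCompact_closedBall _ _)).image_of_continuousOn (ContinuousOn.prodMk ?_ ?_)
  · exact ((continuous_const.mul ((continuous_oddWeight hP).comp continuous_fst)).add
      continuous_snd).continuousOn
  · exact (continuousOn_digitValue hP).comp continuousOn_fst fun q hq => hSm hq.1

end Segments

theorem IsCompact.exists_eq_of_mem_cylinder {E Y : Type*} [TopologicalSpace E] [DiscreteTopology E]
    [TopologicalSpace Y] [DiscreteTopology Y] {S : Set (ℕ → E)} (hS : IsCompact S)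
    {f : (ℕ → E) → Y} (hf : ContinuousOn f S) :
    ∃ N, ∀ x ∈ S, ∀ y ∈ S, y ∈ PiNat.cylinder x N → f y = f x := by
  have hloc : ∀ x ∈ S, ∃ n, ∀ y ∈ S, y ∈ PiNat.cylinder x n → f y = f x := by
    intro x hx
    obtain ⟨u, hu, hxu, huS⟩ := mem_nhdsWithin.1 (hf x hx ((isOpen_discrete {f x}).mem_nhds rfl))
    obtain ⟨_, ⟨z, n, rfl⟩, hxz, hzu⟩ :=
      (PiNat.isTopologicalBasis_cylinders fun _ => E).exists_subset_of_mem_open hxu hu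
    rw [PiNat.mem_cylinder_iff_eq] at hxz
    exact ⟨n, fun y hy hyx => huS ⟨hzu (hxz ▸ hyx), hy⟩⟩
  choose! n hn using hloc
  obtain ⟨t, htS, hcover⟩ := hS.elim_nhds_subcover (fun x => PiNat.cylinder x (n x))
    fun x _ => (PiNat.isOpen_cylinder _ x (n x)).mem_nhds (PiNat.self_mem_cylinder x _)
  refine ⟨t.sup n, fun x hx y hy hxy => ?_⟩
  obtain ⟨z, hz, hxz⟩ := mem_iUnion₂.1 (hcover hx)
  have hyz : y ∈ PiNat.cylinder z (n z) := by
    rw [← PiNat.mem_cylinder_iff_eq.1 hxz]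
    exact PiNat.cylinder_anti x (Finset.le_sup hz) hxy
  rw [hn z (htS z hz) y hy hyz, hn z (htS z hz) x hx hxz]

section Descent

variable {m : ℕ} {Y : Type*} {g : (ℕ → ℤ) → Y}

lemma eq_of_mem_cylinder_of_splice {t : ℕ}
    (ht : ∀ x ∈ balancedSeqs m, ∀ y ∈ balancedSeqs m, y ∈ PiNat.cylinder x (t + 1) → g y = g x)
    (hsplice : ∀ w ∈ balancedSeqs m, ∀ t, ∀ d : ℤ, -m ≤ d → d < m →
      g (splice w t (d + 1) (-m)) = g (splice w t d m)) :
    ∀ x ∈ balancedSeqs m, ∀ y ∈ balancedSeqs m, y ∈ PiNat.cylinder x t → g y = g x := by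
  have hm : |(m : ℤ)| ≤ m := by simp
  have hm' : |(-m : ℤ)| ≤ m := by simp
  have hindep : ∀ w ∈ balancedSeqs m, ∀ d : ℤ, -m ≤ d → d ≤ m →
      g (splice w t d m) = g (splice w t (-m) m) := by
    intro w hw d hd₁ hd₂
    induction d, hd₁ using Int.leInduction with
    | base => rfl
    | succ d hd ih =>
      have hd' : |d + 1| ≤ m := abs_le.2 ⟨by omega, hd₂⟩
      rw [← ih (by omega), ← hsplice w hw t d hd (by omega)]
      exact ht _ (splice_mem_balancedSeqs hw t hd' hm') _ (splice_mem_balancedSeqs hw t hd' hm)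
        splice_mem_cylinder_splice
  intro x hx y hy hxy
  calc g y = g (splice y t (y t) m) :=
        ht _ (splice_mem_balancedSeqs hy t (hy t) hm) y hy mem_cylinder_splice_self
    _ = g (splice y t (-m) m) := hindep y hy _ (abs_le.1 (hy t)).1 (abs_le.1 (hy t)).2
    _ = g (splice x t (-m) m) := by rw [splice_congr hxy]
    _ = g (splice x t (x t) m) := (hindep x hx _ (abs_le.1 (hx t)).1 (abs_le.1 (hx t)).2).symm
    _ = g x := (ht _ (splice_mem_balancedSeqs hx t (hx t) hm) x hx mem_cylinder_splice_self).symm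

lemma eq_of_splice_invariant {N : ℕ}
    (hN : ∀ x ∈ balancedSeqs m, ∀ y ∈ balancedSeqs m, y ∈ PiNat.cylinder x N → g y = g x)
    (hsplice : ∀ w ∈ balancedSeqs m, ∀ t, ∀ d : ℤ, -m ≤ d → d < m →
      g (splice w t (d + 1) (-m)) = g (splice w t d m)) :
    ∀ x ∈ balancedSeqs m, ∀ y ∈ balancedSeqs m, g y = g x := by
  induction N with
  | zero => simpa [PiNat.cylinder_zero] using hN
  | succ t ih => exact ih (eq_of_mem_cylinder_of_splice hN hsplice)

end Descent

section Connectedness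

variable {m : ℕ} {P β : ℝ}

theorem isPreconnected_segUnion (hm : 1 ≤ m) (hP : P = 2 * m + 1) (hβ : |β| ≤ P) :
    IsPreconnected (segUnion P β (balancedSeqs m)) := by
  have hP1 := one_lt_of_eq_two_mul_add_one hm hP
  refine isPreconnected_of_forall_constant fun f hf => ?_
  let g : (ℕ → ℤ) → Bool := fun j => f (β * oddWeight P j, digitValue P j)
  have hseg : ∀ j ∈ balancedSeqs m, ∀ z ∈ seg P β j, f z = g j := fun j hj z hz =>
    isPreconnected_seg.constant (hf.mono (subset_biUnion_of_mem hj)) hz center_mem_seg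
  have hg : ContinuousOn g (balancedSeqs m) :=
    hf.comp (((continuous_const.mul (continuous_oddWeight hP1)).continuousOn).prodMk
      (continuousOn_digitValue hP1)) fun j hj => mem_segUnion.2 ⟨j, hj, center_mem_seg⟩
  obtain ⟨N, hN⟩ := (isCompact_balancedSeqs m).exists_eq_of_mem_cylinder hg
  have hsplice : ∀ w ∈ balancedSeqs m, ∀ t, ∀ d : ℤ, -m ≤ d → d < m →
      g (splice w t (d + 1) (-m)) = g (splice w t d m) := by
    intro w hw t d hd₁ hd₂
    obtain ⟨z, hza, hzb⟩ := seg_splice_inter_nonempty hm hP hβ w t d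
    rw [← hseg _ (splice_mem_balancedSeqs hw t (abs_le.2 ⟨by omega, by omega⟩) (by simp)) z hzb,
      ← hseg _ (splice_mem_balancedSeqs hw t (abs_le.2 ⟨hd₁, hd₂.le⟩) (by simp)) z hza]
  intro x hx y hy
  obtain ⟨a, ha, hxa⟩ := mem_segUnion.1 hx
  obtain ⟨b, hb, hyb⟩ := mem_segUnion.1 hy
  rw [hseg a ha x hxa, hseg b hb y hyb, eq_of_splice_invariant hN hsplice a ha b hb]

lemma digitValue_le_of_head_nonpos (hm : 1 ≤ m) (hP : P = 2 * m + 1) {j : ℕ → ℤ}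
    (hj : j ∈ balancedSeqs m) (h0 : j 0 ≤ 0) : digitValue P j ≤ (2 * P)⁻¹ := by
  have hP1 := one_lt_of_eq_two_mul_add_one hm hP
  have hT := (abs_le.1 (abs_digitValue_le hm hP fun k => hj (k + 1))).2
  have h0' : (j 0 : ℝ) ≤ 0 := by exact_mod_cast h0
  rw [digitValue_eq_div hP1 hj, show (2 * P)⁻¹ = 1 / 2 / P by field_simp]
  gcongr
  linarith

lemma le_digitValue_of_one_le_head (hm : 1 ≤ m) (hP : P = 2 * m + 1) {j : ℕ → ℤ}
    (hj : j ∈ balancedSeqs m) (h0 : 1 ≤ j 0) : (2 * P)⁻¹ ≤ digitValue P j := by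
  have hP1 := one_lt_of_eq_two_mul_add_one hm hP
  have hT := (abs_le.1 (abs_digitValue_le hm hP fun k => hj (k + 1))).1
  have h0' : (1 : ℝ) ≤ j 0 := by exact_mod_cast h0
  rw [digitValue_eq_div hP1 hj, show (2 * P)⁻¹ = 1 / 2 / P by field_simp]
  gcongr
  linarith

lemma disjoint_segUnion_head_nonpos_head_pos (hm : 1 ≤ m) (hP : P = 2 * m + 1) (hβ : P < |β|) :
    Disjoint (segUnion P β (balancedSeqs m ∩ {j | j 0 ≤ 0}))
      (segUnion P β (balancedSeqs m ∩ {j | 1 ≤ j 0})) := by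
  have hP1 := one_lt_of_eq_two_mul_add_one hm hP
  refine disjoint_left.2 fun z hzL hzH => ?_
  obtain ⟨a, ⟨ha, ha0⟩, hza⟩ := mem_segUnion.1 hzL
  obtain ⟨b, ⟨hb, hb0⟩, hzb⟩ := mem_segUnion.1 hzH
  obtain ⟨hy, hx⟩ := seg_inter_nonempty_iff.1 ⟨z, hza, hzb⟩
  have hya := digitValue_le_of_head_nonpos hm hP ha ha0
  have hyb := le_digitValue_of_one_le_head hm hP hb hb0
  have hra : a = splice (fun _ => 0) 0 0 (m : ℤ) :=
    (eq_splice_of_digitValue_eq hm hP ha (by linarith)).resolve_right fun h => by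
      have h1 : a 0 = 1 := by rw [h]; rfl
      have h0 : a 0 ≤ 0 := ha0
      omega
  have hrb : b = splice (fun _ => 0) 0 (0 + 1) (-m : ℤ) :=
    (eq_splice_of_digitValue_eq hm hP hb (by linarith)).resolve_left fun h => by
      have h1 : b 0 = 0 := by rw [h]; rfl
      have h0 : 1 ≤ b 0 := hb0
      omega
  rw [hra, hrb, ← mul_sub, abs_mul, abs_oddWeight_splice_sub hP1, zero_add, pow_one,
    ← div_eq_mul_inv, div_le_one (by linarith)] at hx
  linarith

theorem not_isPreconnected_segUnion (hm : 1 ≤ m) (hP : P = 2 * m + 1) (hβ : P < |β|) :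
    ¬ IsPreconnected (segUnion P β (balancedSeqs m)) := by
  have hP1 := one_lt_of_eq_two_mul_add_one hm hP
  have hdisj := disjoint_segUnion_head_nonpos_head_pos hm hP hβ
  have hcover : segUnion P β (balancedSeqs m) ⊆ segUnion P β (balancedSeqs m ∩ {j | j 0 ≤ 0}) ∪
      segUnion P β (balancedSeqs m ∩ {j | 1 ≤ j 0}) := fun z hz => by
    obtain ⟨j, hj, hzj⟩ := mem_segUnion.1 hz
    rcases le_or_gt (j 0) 0 with h | h
    · exact .inl (mem_segUnion.2 ⟨j, ⟨hj, h⟩, hzj⟩)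
    · exact .inr (mem_segUnion.2 ⟨j, ⟨hj, h⟩, hzj⟩)
  have hclosed (q : ℤ → Prop) : IsClosed (segUnion P β (balancedSeqs m ∩ {j | q (j 0)})) :=
    (isCompact_segUnion hP1 ((isCompact_balancedSeqs m).inter_right
      ((isClosed_discrete {d | q d}).preimage (continuous_apply 0))) inter_subset_left).isClosed
  have hcenter {q : ℤ → Prop} (d : ℤ) (hd : |d| ≤ m) (hq : q d) :
      ((β * oddWeight P fun _ => d), digitValue P fun _ => d) ∈
        segUnion P β (balancedSeqs m ∩ {j | q (j 0)}) :=
    mem_segUnion.2 ⟨fun _ => d, ⟨fun _ => hd, hq⟩, center_mem_seg⟩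
  have hcenter_mem (d : ℤ) (hd : |d| ≤ m) :
      ((β * oddWeight P fun _ => d), digitValue P fun _ => d) ∈ segUnion P β (balancedSeqs m) :=
    mem_segUnion.2 ⟨fun _ => d, fun _ => hd, center_mem_seg⟩
  rw [isPreconnected_iff_subset_of_disjoint_closed]
  intro h
  rcases h _ _ (hclosed (· ≤ 0)) (hclosed (1 ≤ ·)) hcover
    (by rw [hdisj.inter_eq, inter_empty]) with hsub | hsub
  · exact disjoint_left.1 hdisj (hsub (hcenter_mem 1 (by simp [hm])))
      (hcenter (q := (1 ≤ ·)) 1 (by simp [hm]) le_rfl)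
  · exact disjoint_left.1 hdisj (hcenter (q := (· ≤ 0)) 0 (by simp) le_rfl)
      (hsub (hcenter_mem 0 (by simp)))

theorem isConnected_segUnion_iff (hm : 1 ≤ m) (hP : P = 2 * m + 1) :
    IsConnected (segUnion P β (balancedSeqs m)) ↔ |β| ≤ P :=
  ⟨fun h => not_lt.1 fun hβ => not_isPreconnected_segUnion hm hP hβ h.2,
    fun hβ => ⟨⟨_, mem_segUnion.2 ⟨fun _ => 0, by simp [balancedSeqs], center_mem_seg⟩⟩,
      isPreconnected_segUnion hm hP hβ⟩⟩

end Connectedness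

section ZeroWord

variable {m : ℕ} {p : ℤ} {ε : ℝ} {z : ℝ × ℝ}

lemma bshift_eq_mul_oddIndicator (ε : ℝ) (d : ℤ) : bshift ε d = ε * oddIndicator d := by
  unfold bshift oddIndicator; split_ifs <;> simp

lemma mem_Tset_iff (hm : 1 ≤ m) (hp : (p : ℝ) = 2 * m + 1) :
    z ∈ Tset p m ε ↔ z ∈ segUnion p ε (balancedSeqs m) := by
  have hp1 := one_lt_of_eq_two_mul_add_one hm hp
  have hfst : ∀ i j : ℕ → ℤ, i ∈ balancedSeqs m →
      ∑' k : ℕ, ((p : ℝ) ^ (k + 1))⁻¹ * ((i k : ℝ) + bshift ε (j k)) =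
        digitValue p i + ε * oddWeight p j := fun i j hi => by
    simp only [bshift_eq_mul_oddIndicator]
    rw [oddWeight, ← radixSum_const_mul]
    exact radixSum_add hp1 (abs_cast_le_of_mem_balancedSeqs hi) fun k => by
      rw [abs_mul]; exact mul_le_of_le_one_right (abs_nonneg ε) (abs_oddIndicator_le _)
  rw [mem_segUnion]
  constructor
  · rintro ⟨i, j, hi, hj, hx, hy⟩
    refine ⟨j, hj, mem_seg.2 ⟨?_, hy⟩⟩
    rw [hx, hfst i j hi, add_sub_cancel_right]
    exact abs_digitValue_le hm hp hi
  · rintro ⟨j, hj, hzj⟩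
    obtain ⟨hx, hy⟩ := mem_seg.1 hzj
    obtain ⟨i, hi, hit⟩ := exists_digitValue_eq hm hp hx
    exact ⟨i, j, hi, hj, by rw [hfst i j hi, hit, sub_add_cancel], hy⟩

lemma mem_fmap_zero_image_iff (hp : (p : ℝ) ≠ 0) (i : ℤ) (A : Set (ℝ × ℝ)) :
    z ∈ fmap p ε i 0 '' A ↔ ((p : ℝ) * z.1 - i, (p : ℝ) * z.2) ∈ A := by
  have hb : bshift ε 0 = 0 := by simp [bshift]
  refine mem_image_iff_of_inverse (g := fun w : ℝ × ℝ => ((p : ℝ) * w.1 - i, (p : ℝ) * w.2))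
    (fun w => ?_) (fun w => ?_) <;>
    ext <;> simp only [fmap, hb, Int.cast_zero, add_zero] <;> field_simp <;> ring

lemma Gset_replicate_zero (hm : 1 ≤ m) (hp : (p : ℝ) = 2 * m + 1) (n : ℕ) :
    Gset p m ε (List.replicate n 0) =
      (fun z => (z.1, (p : ℝ) ^ n * z.2)) ⁻¹' segUnion p (ε / p ^ n) (balancedSeqs m) := by
  have hp0 : 0 < (p : ℝ) := by rw [hp]; positivity
  induction n with
  | zero =>
    ext z
    simp only [List.replicate_zero, Gset, pow_zero, one_mul, div_one, mem_preimage]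
    exact mem_Tset_iff hm hp
  | succ n ih =>
    ext z
    simp only [List.replicate_succ, Gset, mem_iUnion, Finset.mem_Icc, exists_prop,
      mem_fmap_zero_image_iff hp0.ne', ih, mem_preimage, mem_segUnion, mem_seg]
    have key (c : ℝ) : (∃ i : ℤ, |i| ≤ m ∧ |(p : ℝ) * z.1 - i - c| ≤ 1 / 2) ↔
        |z.1 - c / p| ≤ 1 / 2 := by
      simp_rw [sub_right_comm _ _ c]
      rw [exists_int_abs_sub_le_half_iff, show (p : ℝ) * z.1 - c = p * (z.1 - c / p) by
        field_simp, abs_mul, abs_of_pos hp0, hp]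
      constructor <;> intro h <;> nlinarith [abs_nonneg (z.1 - c / p)]
    have hscale (j : ℕ → ℤ) : ε / p ^ (n + 1) * oddWeight p j = ε / p ^ n * oddWeight p j / p := by
      rw [pow_succ]; field_simp
    simp_rw [hscale, ← key, ← mul_assoc, ← pow_succ, ← abs_le]
    constructor
    · rintro ⟨i, hi, j, hj, hx, hy⟩
      exact ⟨j, hj, ⟨i, hi, hx⟩, hy⟩
    · rintro ⟨j, hj, ⟨i, hi, hx⟩, hy⟩
      exact ⟨i, hi, j, hj, hx, hy⟩

end ZeroWord

theorem stmt11_general (m : ℕ) (hm : 1 ≤ m) (p : ℤ) (hp : p = 2 * (m : ℤ) + 1) (ε : ℝ)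
    (n : ℕ) :
    IsConnected (Gset p m ε (List.replicate n 0)) ↔ |ε| ≤ (p : ℝ) ^ (n + 1) := by
  have hpR : (p : ℝ) = 2 * m + 1 := by rw [hp]; push_cast; ring
  have hpn : 0 < (p : ℝ) ^ n := by rw [hpR]; positivity
  let scale : ℝ × ℝ ≃ₜ ℝ × ℝ := (Homeomorph.refl ℝ).prodCongr (Homeomorph.mulLeft₀ _ hpn.ne')
  rw [Gset_replicate_zero hm hpR, show (fun z : ℝ × ℝ => (z.1, (p : ℝ) ^ n * z.2)) = scale from rfl,
    scale.isConnected_preimage, isConnected_segUnion_iff hm hpR, abs_div, abs_of_pos hpn,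
    div_le_iff₀ hpn, pow_succ']

/-- `G₀ = G_{0ⁿ}` is connected if and only if `|ε| ≤ p^(n+1)`. -/
theorem stmt11 (m : ℕ) (hm : 1 ≤ m) (p : ℤ) (hp : p = 2 * (m : ℤ) + 1) (ε : ℝ)
    (n : ℕ) (hn : 1 ≤ n) :
    IsConnected (Gset p m ε (List.replicate n 0)) ↔ |ε| ≤ (p : ℝ) ^ (n + 1) :=
  stmt11_general m hm p hp ε n
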